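/- Let G₁ and G₂ be simple connected graphs with n₁ = |V(G₁)|, n₂ = |V(G₂)| vertices and m₁ = |E(G₁)|, m₂ = |E(G₂)| edges. Then the F-index of the vertex Q-join satisfies F(G₁ ∨̇_Q G₂) = F(G₁) + F(G₂) + 3n₂M₁(G₁) + 3n₁M₁(G₂) + M₄(G₁) + 3ReZM(G₁) + 6m₁n₂² + 6m₂n₁² + n₁n₂(n₁² + n₂²). -/

import Mathlib

/-- The subdivision graph `S(G)`: a new vertex is inserted into each edge of `G`
(each edge is replaced by a path of length 2). The inserted vertices form the
right summand `↥G.edgeSet`. -/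
def Sgraph {V : Type*} (G : SimpleGraph V) : SimpleGraph (V ⊕ ↥G.edgeSet) where
  Adj x y :=
    match x, y with
    | Sum.inl v, Sum.inr e => v ∈ (e : Sym2 V)
    | Sum.inr e, Sum.inl v => v ∈ (e : Sym2 V)
    | _, _ => False
  symm := by constructor; rintro (v | e) (w | f) h <;> exact h
  loopless := by constructor; rintro (v | e) h <;> exact h

/-- The graph `R(G)`: obtained from `G` by inserting a new vertex into each edge of `G`
and joining each new vertex to the end vertices of its corresponding edge. -/
def Rgraph {V : Type*} (G : SimpleGraph V) : SimpleGraph (V ⊕ ↥G.edgeSet) where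
  Adj x y :=
    match x, y with
    | Sum.inl v, Sum.inl w => G.Adj v w
    | Sum.inl v, Sum.inr e => v ∈ (e : Sym2 V)
    | Sum.inr e, Sum.inl v => v ∈ (e : Sym2 V)
    | Sum.inr _, Sum.inr _ => False
  symm := by
    constructor
    rintro (v | e) (w | f) h
    · exact G.adj_symm h
    · exact h
    · exact h
    · exact h
  loopless := by
    constructor
    rintro (v | e) h
    · exact G.irrefl h
    · exact h

/-- The graph `Q(G)`: obtained from `G` by inserting a new vertex into each edge of `G`,
then joining by edges those pairs of new vertices lying on adjacent edges of `G`. -/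
def Qgraph {V : Type*} (G : SimpleGraph V) : SimpleGraph (V ⊕ ↥G.edgeSet) where
  Adj x y :=
    match x, y with
    | Sum.inl _, Sum.inl _ => False
    | Sum.inl v, Sum.inr e => v ∈ (e : Sym2 V)
    | Sum.inr e, Sum.inl v => v ∈ (e : Sym2 V)
    | Sum.inr e, Sum.inr f => e ≠ f ∧ ∃ v, v ∈ (e : Sym2 V) ∧ v ∈ (f : Sym2 V)
  symm := by
    constructor
    rintro (v | e) (w | f) h
    · exact h
    · exact h
    · exact h
    · exact ⟨h.1.symm, by obtain ⟨v, h1, h2⟩ := h.2; exact ⟨v, h2, h1⟩⟩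
  loopless := by
    constructor
    rintro (v | e) h
    · exact h
    · exact h.1 rfl

/-- The total graph `T(G)`: obtained from `G` by inserting a new vertex into each edge,
joining each new vertex to the end vertices of its corresponding edge, and joining by
edges those pairs of new vertices lying on adjacent edges of `G`. -/
def Tgraph {V : Type*} (G : SimpleGraph V) : SimpleGraph (V ⊕ ↥G.edgeSet) where
  Adj x y :=
    match x, y with
    | Sum.inl v, Sum.inl w => G.Adj v w
    | Sum.inl v, Sum.inr e => v ∈ (e : Sym2 V)
    | Sum.inr e, Sum.inl v => v ∈ (e : Sym2 V)
    | Sum.inr e, Sum.inr f => e ≠ f ∧ ∃ v, v ∈ (e : Sym2 V) ∧ v ∈ (f : Sym2 V)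
  symm := by
    constructor
    rintro (v | e) (w | f) h
    · exact G.adj_symm h
    · exact h
    · exact h
    · exact ⟨h.1.symm, by obtain ⟨v, h1, h2⟩ := h.2; exact ⟨v, h2, h1⟩⟩
  loopless := by
    constructor
    rintro (v | e) h
    · exact G.irrefl h
    · exact h.1 rfl

/-- The disjoint union of `H` and `K` together with all edges joining a vertex `a` of `H`
with `P a` to every vertex of `K`. -/
def joinOn {A B : Type*} (H : SimpleGraph A) (K : SimpleGraph B) (P : A → Prop) :
    SimpleGraph (A ⊕ B) where
  Adj x y :=
    match x, y with
    | Sum.inl a, Sum.inl a' => H.Adj a a'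
    | Sum.inr b, Sum.inr b' => K.Adj b b'
    | Sum.inl a, Sum.inr _ => P a
    | Sum.inr _, Sum.inl a => P a
  symm := by
    constructor
    rintro (a | b) (a' | b') h
    · exact H.adj_symm h
    · exact h
    · exact h
    · exact K.adj_symm h
  loopless := by
    constructor
    rintro (a | b) h
    · exact H.irrefl h
    · exact K.irrefl h

/-- The vertex S-join `G₁ ∨̇_S G₂`: obtained from `S(G₁)` and `G₂` by joining each vertex
of `V(G₁)` to every vertex of `G₂`. -/
def vertexSJoin {V₁ V₂ : Type*} (G₁ : SimpleGraph V₁) (G₂ : SimpleGraph V₂) :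
    SimpleGraph ((V₁ ⊕ ↥G₁.edgeSet) ⊕ V₂) :=
  joinOn (Sgraph G₁) G₂ (fun x => x.isLeft)

/-- The edge S-join `G₁ ∨̱_S G₂`: obtained from `S(G₁)` and `G₂` by joining each inserted
vertex (each vertex of `I(G₁)`) to every vertex of `G₂`. -/
def edgeSJoin {V₁ V₂ : Type*} (G₁ : SimpleGraph V₁) (G₂ : SimpleGraph V₂) :
    SimpleGraph ((V₁ ⊕ ↥G₁.edgeSet) ⊕ V₂) :=
  joinOn (Sgraph G₁) G₂ (fun x => x.isRight)

/-- The vertex R-join `G₁ ∨̇_R G₂`. -/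
def vertexRJoin {V₁ V₂ : Type*} (G₁ : SimpleGraph V₁) (G₂ : SimpleGraph V₂) :
    SimpleGraph ((V₁ ⊕ ↥G₁.edgeSet) ⊕ V₂) :=
  joinOn (Rgraph G₁) G₂ (fun x => x.isLeft)

/-- The edge R-join `G₁ ∨̱_R G₂`. -/
def edgeRJoin {V₁ V₂ : Type*} (G₁ : SimpleGraph V₁) (G₂ : SimpleGraph V₂) :
    SimpleGraph ((V₁ ⊕ ↥G₁.edgeSet) ⊕ V₂) :=
  joinOn (Rgraph G₁) G₂ (fun x => x.isRight)

/-- The vertex Q-join `G₁ ∨̇_Q G₂`. -/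
def vertexQJoin {V₁ V₂ : Type*} (G₁ : SimpleGraph V₁) (G₂ : SimpleGraph V₂) :
    SimpleGraph ((V₁ ⊕ ↥G₁.edgeSet) ⊕ V₂) :=
  joinOn (Qgraph G₁) G₂ (fun x => x.isLeft)

/-- The edge Q-join `G₁ ∨̱_Q G₂`. -/
def edgeQJoin {V₁ V₂ : Type*} (G₁ : SimpleGraph V₁) (G₂ : SimpleGraph V₂) :
    SimpleGraph ((V₁ ⊕ ↥G₁.edgeSet) ⊕ V₂) :=
  joinOn (Qgraph G₁) G₂ (fun x => x.isRight)

/-- The vertex T-join `G₁ ∨̇_T G₂`. -/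
def vertexTJoin {V₁ V₂ : Type*} (G₁ : SimpleGraph V₁) (G₂ : SimpleGraph V₂) :
    SimpleGraph ((V₁ ⊕ ↥G₁.edgeSet) ⊕ V₂) :=
  joinOn (Tgraph G₁) G₂ (fun x => x.isLeft)

/-- The edge T-join `G₁ ∨̱_T G₂`. -/
def edgeTJoin {V₁ V₂ : Type*} (G₁ : SimpleGraph V₁) (G₂ : SimpleGraph V₂) :
    SimpleGraph ((V₁ ⊕ ↥G₁.edgeSet) ⊕ V₂) :=
  joinOn (Tgraph G₁) G₂ (fun x => x.isRight)

/-- Degree of a vertex in a graph on a finite vertex type. -/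
noncomputable def gdeg {V : Type*} [Finite V] (G : SimpleGraph V) (v : V) : ℕ :=
  haveI : Fintype ↥(G.neighborSet v) := Fintype.ofFinite _
  G.degree v

/-- The forgotten topological index (F-index): `F(G) = ∑_{v ∈ V(G)} d_G(v)³`. -/
noncomputable def Findex {V : Type*} [Finite V] (G : SimpleGraph V) : ℕ :=
  haveI := Fintype.ofFinite V
  ∑ v : V, gdeg G v ^ 3

/-- The first Zagreb index: `M₁(G) = ∑_{v ∈ V(G)} d_G(v)²`. -/
noncomputable def M1 {V : Type*} [Finite V] (G : SimpleGraph V) : ℕ :=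
  haveI := Fintype.ofFinite V
  ∑ v : V, gdeg G v ^ 2

/-- `M₄(G) = ∑_{v ∈ V(G)} d_G(v)⁴`. -/
noncomputable def M4 {V : Type*} [Finite V] (G : SimpleGraph V) : ℕ :=
  haveI := Fintype.ofFinite V
  ∑ v : V, gdeg G v ^ 4

/-- The hyper Zagreb index: `HM(G) = ∑_{uv ∈ E(G)} (d_G(u) + d_G(v))²`. -/
noncomputable def HM {V : Type*} [Finite V] (G : SimpleGraph V) : ℕ :=
  haveI : Fintype ↥G.edgeSet := Fintype.ofFinite _
  ∑ e : ↥G.edgeSet,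
    Sym2.lift ⟨fun u v => (gdeg G u + gdeg G v) ^ 2,
      fun u v => by dsimp only; rw [add_comm]⟩ (e : Sym2 V)

/-- The redefined Zagreb index:
`ReZM(G) = ∑_{uv ∈ E(G)} d_G(u) d_G(v) (d_G(u) + d_G(v))`. -/
noncomputable def ReZM {V : Type*} [Finite V] (G : SimpleGraph V) : ℕ :=
  haveI : Fintype ↥G.edgeSet := Fintype.ofFinite _
  ∑ e : ↥G.edgeSet,
    Sym2.lift ⟨fun u v => gdeg G u * gdeg G v * (gdeg G u + gdeg G v),
      fun u v => by dsimp only; ring⟩ (e : Sym2 V)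

/-- The number of edges of `G`. -/
noncomputable def numEdges {V : Type*} (G : SimpleGraph V) : ℕ :=
  Nat.card ↥G.edgeSet

/-!
In `G₁ ∨̇_Q G₂` a vertex `v` of `G₁` has degree `d(v) + n₂`, a vertex `w` of `G₂` has degree
`d(w) + n₁`, and the vertex inserted into the edge `uv` has degree `d(u) + d(v)`: its two ends,
plus the `(d(u) - 1) + (d(v) - 1)` other edges at `u` or `v`. Expanding the cubes, the vertices of
`G₁` contribute `F(G₁) + 3n₂M₁(G₁) + 6n₂²m₁ + n₁n₂³` by the handshake lemma (symmetrically for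
`G₂`), and the inserted vertices contribute `M₄(G₁) + 3 ReZM(G₁)`, since
`(d(u) + d(v))³ = d(u)³ + d(v)³ + 3 d(u) d(v) (d(u) + d(v))` and every vertex `v` lies on `d(v)`
edges, so that `∑_{uv} (d(u)³ + d(v)³) = ∑_v d(v)⁴`.
-/

open Finset

section Degrees

variable {V : Type*} [Finite V] (G : SimpleGraph V)

lemma gdeg_eq_degree (v : V) [Fintype (G.neighborSet v)] : gdeg G v = G.degree v := by
  unfold gdeg
  congr!

lemma gdeg_eq_card_neighborFinset [Fintype V] [DecidableRel G.Adj] (v : V) :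
    gdeg G v = #(G.neighborFinset v) := by
  rw [gdeg_eq_degree, SimpleGraph.card_neighborFinset_eq_degree]

lemma card_edgeSet_filter_mem [Fintype G.edgeSet] [DecidableEq V] (v : V) :
    #{e : G.edgeSet | v ∈ (e : Sym2 V)} = gdeg G v := by
  have : Fintype (G.neighborSet v) := Fintype.ofFinite _
  rw [gdeg_eq_degree, ← SimpleGraph.card_neighborSet_eq_degree, ← Fintype.card_subtype,
    ← Nat.card_eq_fintype_card, ← Nat.card_eq_fintype_card]
  exact Nat.card_congr
    ((Equiv.subtypeSubtypeEquivSubtypeInter _ _).trans (G.incidenceSetEquivNeighborSet v))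

lemma sum_gdeg_eq_two_mul_numEdges [Fintype V] : ∑ v, gdeg G v = 2 * numEdges G := by
  classical
  simp only [gdeg_eq_degree, SimpleGraph.sum_degrees_eq_twice_card_edges, numEdges,
    Nat.card_eq_fintype_card, SimpleGraph.edgeFinset_card]

end Degrees

section Indices

variable {V : Type*} [Finite V] (G : SimpleGraph V)

lemma Findex_eq_sum [Fintype V] : Findex G = ∑ v, gdeg G v ^ 3 := by
  unfold Findex
  congr!

lemma M1_eq_sum [Fintype V] : M1 G = ∑ v, gdeg G v ^ 2 := by
  unfold M1
  congr!

lemma M4_eq_sum [Fintype V] : M4 G = ∑ v, gdeg G v ^ 4 := by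
  unfold M4
  congr!

lemma ReZM_eq_sum [Fintype G.edgeSet] :
    ReZM G = ∑ e : G.edgeSet, Sym2.lift ⟨fun u v => gdeg G u * gdeg G v * (gdeg G u + gdeg G v),
      fun u v => by dsimp only; ring⟩ (e : Sym2 V) := by
  unfold ReZM
  congr!

end Indices

section JoinOn

variable {A B : Type*} (H : SimpleGraph A) (K : SimpleGraph B) {P : A → Prop}

@[simp] lemma joinOn_adj_inl_inl {a a' : A} : (joinOn H K P).Adj (.inl a) (.inl a') ↔ H.Adj a a' :=
  Iff.rfl

@[simp] lemma joinOn_adj_inr_inr {b b' : B} : (joinOn H K P).Adj (.inr b) (.inr b') ↔ K.Adj b b' :=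
  Iff.rfl

@[simp] lemma joinOn_adj_inl_inr {a : A} {b : B} : (joinOn H K P).Adj (.inl a) (.inr b) ↔ P a :=
  Iff.rfl

@[simp] lemma joinOn_adj_inr_inl {a : A} {b : B} : (joinOn H K P).Adj (.inr b) (.inl a) ↔ P a :=
  Iff.rfl

variable [Finite A] [Finite B]

lemma gdeg_joinOn_inl_of_pos {a : A} (ha : P a) :
    gdeg (joinOn H K P) (.inl a) = gdeg H a + Nat.card B := by
  classical
  have := Fintype.ofFinite A
  have := Fintype.ofFinite B
  have hN : (joinOn H K P).neighborFinset (.inl a) = (H.neighborFinset a).disjSum univ := by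
    ext (a' | b) <;> simp [ha]
  rw [gdeg_eq_card_neighborFinset, gdeg_eq_card_neighborFinset, hN, card_disjSum, card_univ,
    Nat.card_eq_fintype_card]

lemma gdeg_joinOn_inl_of_neg {a : A} (ha : ¬ P a) :
    gdeg (joinOn H K P) (.inl a) = gdeg H a := by
  classical
  have := Fintype.ofFinite A
  have := Fintype.ofFinite B
  have hN : (joinOn H K P).neighborFinset (.inl a) = (H.neighborFinset a).disjSum ∅ := by
    ext (a' | b) <;> simp [ha]
  rw [gdeg_eq_card_neighborFinset, gdeg_eq_card_neighborFinset, hN, card_disjSum, card_empty,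
    add_zero]

lemma gdeg_joinOn_inr (b : B) :
    gdeg (joinOn H K P) (.inr b) = gdeg K b + Nat.card {a // P a} := by
  classical
  have := Fintype.ofFinite A
  have := Fintype.ofFinite B
  have hN : (joinOn H K P).neighborFinset (.inr b) =
      ({a | P a} : Finset A).disjSum (K.neighborFinset b) := by
    ext (a | b') <;> simp
  rw [gdeg_eq_card_neighborFinset, gdeg_eq_card_neighborFinset, hN, card_disjSum, add_comm,
    Nat.card_eq_fintype_card, Fintype.card_subtype]

end JoinOn

section Qgraph

variable {V : Type*} (G : SimpleGraph V)

@[simp] lemma Qgraph_adj_inl_inl {v w : V} : ¬ (Qgraph G).Adj (.inl v) (.inl w) :=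
  id

@[simp] lemma Qgraph_adj_inl_inr {v : V} {e : G.edgeSet} :
    (Qgraph G).Adj (.inl v) (.inr e) ↔ v ∈ (e : Sym2 V) :=
  Iff.rfl

@[simp] lemma Qgraph_adj_inr_inl {v : V} {e : G.edgeSet} :
    (Qgraph G).Adj (.inr e) (.inl v) ↔ v ∈ (e : Sym2 V) :=
  Iff.rfl

@[simp] lemma Qgraph_adj_inr_inr {e f : G.edgeSet} :
    (Qgraph G).Adj (.inr e) (.inr f) ↔ e ≠ f ∧ ∃ v, v ∈ (e : Sym2 V) ∧ v ∈ (f : Sym2 V) :=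
  Iff.rfl

variable [Finite V]

lemma gdeg_Qgraph_inl (v : V) : gdeg (Qgraph G) (.inl v) = gdeg G v := by
  classical
  have := Fintype.ofFinite V
  have hN : (Qgraph G).neighborFinset (.inl v) =
      (∅ : Finset V).disjSum ({e | v ∈ (e : Sym2 V)} : Finset G.edgeSet) := by
    ext (w | e) <;> simp
  rw [gdeg_eq_card_neighborFinset, hN, card_disjSum, card_empty, zero_add,
    card_edgeSet_filter_mem]

lemma gdeg_Qgraph_inr_mk {u v : V} (h : s(u, v) ∈ G.edgeSet) :
    gdeg (Qgraph G) (.inr ⟨s(u, v), h⟩) = gdeg G u + gdeg G v := by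
  classical
  have := Fintype.ofFinite V
  set e : G.edgeSet := ⟨s(u, v), h⟩
  set Eu : Finset G.edgeSet := {f | u ∈ (f : Sym2 V)}
  set Ev : Finset G.edgeSet := {f | v ∈ (f : Sym2 V)}
  have huv : u ≠ v := G.ne_of_adj h
  have hN : (Qgraph G).neighborFinset (.inr e) =
      ({u, v} : Finset V).disjSum ((Eu ∪ Ev).erase e) := by
    ext (w | f)
    · simp [e]
    · simp [e, Eu, Ev, ne_comm]
  have hEuv : Eu ∩ Ev = {e} := by
    ext f
    simp [Eu, Ev, Sym2.mem_and_mem_iff huv, e, Subtype.ext_iff]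
  have he : e ∈ Eu ∪ Ev := by simp [Eu, e]
  have hcard := card_union_add_card_inter Eu Ev
  rw [hEuv, card_singleton, card_edgeSet_filter_mem, card_edgeSet_filter_mem] at hcard
  rw [gdeg_eq_card_neighborFinset, hN, card_disjSum, card_pair huv, card_erase_of_mem he]
  have := card_pos.mpr ⟨e, he⟩
  omega

lemma gdeg_Qgraph_inr (e : G.edgeSet) :
    gdeg (Qgraph G) (.inr e) =
      Sym2.lift ⟨fun u v => gdeg G u + gdeg G v, fun _ _ => add_comm _ _⟩ (e : Sym2 V) := by
  obtain ⟨z, hz⟩ := e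
  induction z using Sym2.ind with
  | _ u v => exact gdeg_Qgraph_inr_mk G hz

end Qgraph

section EdgeSums

variable {V : Type*} [Finite V] (G : SimpleGraph V)

lemma sum_edgeSet_lift_add {M : Type*} [AddCommMonoid M] [Fintype V] [Fintype G.edgeSet]
    (f : V → M) :
    ∑ e : G.edgeSet, Sym2.lift ⟨fun u v => f u + f v, fun _ _ => add_comm _ _⟩ (e : Sym2 V) =
      ∑ v, gdeg G v • f v := by
  classical
  have hedge (e : G.edgeSet) :
      Sym2.lift ⟨fun u v => f u + f v, fun _ _ => add_comm _ _⟩ (e : Sym2 V) =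
        ∑ v with v ∈ (e : Sym2 V), f v := by
    obtain ⟨z, hz⟩ := e
    induction z using Sym2.ind with
    | _ u v =>
      have hfilter : ({w | w ∈ s(u, v)} : Finset V) = {u, v} := by ext; simp
      rw [Sym2.lift_mk, hfilter, sum_pair (G.ne_of_adj hz)]
  simp_rw [hedge, sum_filter]
  rw [sum_comm]
  refine sum_congr rfl fun v _ => ?_
  rw [← sum_filter, sum_const, card_edgeSet_filter_mem]

lemma sum_edgeSet_lift_gdeg_add_pow_three [Fintype V] [Fintype G.edgeSet] :
    ∑ e : G.edgeSet,
        Sym2.lift ⟨fun u v => gdeg G u + gdeg G v, fun _ _ => add_comm _ _⟩ (e : Sym2 V) ^ 3 =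
      M4 G + 3 * ReZM G := by
  have hcube (e : G.edgeSet) :
      Sym2.lift ⟨fun u v => gdeg G u + gdeg G v, fun _ _ => add_comm _ _⟩ (e : Sym2 V) ^ 3 =
        Sym2.lift ⟨fun u v => gdeg G u ^ 3 + gdeg G v ^ 3, fun _ _ => add_comm _ _⟩ (e : Sym2 V) +
          3 * Sym2.lift ⟨fun u v => gdeg G u * gdeg G v * (gdeg G u + gdeg G v),
            fun u v => by dsimp only; ring⟩ (e : Sym2 V) := by
    obtain ⟨z, hz⟩ := e
    induction z using Sym2.ind with
    | _ u v => simp only [Sym2.lift_mk]; ring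
  rw [sum_congr rfl fun e _ => hcube e, sum_add_distrib, ← mul_sum,
    sum_edgeSet_lift_add G fun v => gdeg G v ^ 3, M4_eq_sum, ReZM_eq_sum]
  simp_rw [smul_eq_mul, ← pow_succ']

lemma sum_gdeg_add_pow_three [Fintype V] (n : ℕ) :
    ∑ v, (gdeg G v + n) ^ 3 =
      Findex G + 3 * n * M1 G + 6 * n ^ 2 * numEdges G + Nat.card V * n ^ 3 := by
  have hexpand (d : ℕ) : (d + n) ^ 3 = d ^ 3 + 3 * n * d ^ 2 + 3 * n ^ 2 * d + n ^ 3 := by ring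
  simp_rw [hexpand, sum_add_distrib, ← mul_sum, sum_const, card_univ, smul_eq_mul,
    sum_gdeg_eq_two_mul_numEdges, Findex_eq_sum, M1_eq_sum, Nat.card_eq_fintype_card]
  ring

end EdgeSums

section VertexQJoin

variable {V₁ V₂ : Type*} [Finite V₁] [Finite V₂] (G₁ : SimpleGraph V₁) (G₂ : SimpleGraph V₂)

lemma gdeg_vertexQJoin_inl_inl (v : V₁) :
    gdeg (vertexQJoin G₁ G₂) (.inl (.inl v)) = gdeg G₁ v + Nat.card V₂ := by
  rw [vertexQJoin, gdeg_joinOn_inl_of_pos _ _ (by rfl), gdeg_Qgraph_inl]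

lemma gdeg_vertexQJoin_inl_inr (e : G₁.edgeSet) :
    gdeg (vertexQJoin G₁ G₂) (.inl (.inr e)) =
      Sym2.lift ⟨fun u v => gdeg G₁ u + gdeg G₁ v, fun _ _ => add_comm _ _⟩ (e : Sym2 V₁) := by
  rw [vertexQJoin, gdeg_joinOn_inl_of_neg _ _ (by simp), gdeg_Qgraph_inr]

lemma gdeg_vertexQJoin_inr (w : V₂) :
    gdeg (vertexQJoin G₁ G₂) (.inr w) = gdeg G₂ w + Nat.card V₁ := by
  rw [vertexQJoin, gdeg_joinOn_inr, Nat.card_congr Equiv.sumIsLeft]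

end VertexQJoin

theorem Findex_vertexQJoin_general {V₁ V₂ : Type*} [Finite V₁] [Finite V₂]
    (G₁ : SimpleGraph V₁) (G₂ : SimpleGraph V₂)
    (n₁ n₂ m₁ m₂ : ℕ)
    (hn₁ : n₁ = Nat.card V₁) (hn₂ : n₂ = Nat.card V₂)
    (hm₁ : m₁ = numEdges G₁) (hm₂ : m₂ = numEdges G₂) :
    (Findex (vertexQJoin G₁ G₂) : ℤ) =
      (Findex G₁ : ℤ) + (Findex G₂ : ℤ) + 3 * (n₂ : ℤ) * (M1 G₁ : ℤ) + 3 * (n₁ : ℤ) * (M1 G₂ : ℤ)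
        + (M4 G₁ : ℤ) + 3 * (ReZM G₁ : ℤ) + 6 * (m₁ : ℤ) * (n₂ : ℤ) ^ 2 + 6 * (m₂ : ℤ) * (n₁ : ℤ) ^ 2
        + (n₁ : ℤ) * (n₂ : ℤ) * ((n₁ : ℤ) ^ 2 + (n₂ : ℤ) ^ 2) := by
  classical
  have := Fintype.ofFinite V₁
  have := Fintype.ofFinite V₂
  subst hn₁ hn₂ hm₁ hm₂
  rw [Findex_eq_sum, Fintype.sum_sum_type, Fintype.sum_sum_type]
  simp only [gdeg_vertexQJoin_inl_inl, gdeg_vertexQJoin_inl_inr, gdeg_vertexQJoin_inr]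
  rw [sum_gdeg_add_pow_three, sum_gdeg_add_pow_three, sum_edgeSet_lift_gdeg_add_pow_three]
  push_cast
  ring

theorem Findex_vertexQJoin {V₁ V₂ : Type*} [Finite V₁] [Finite V₂]
    (G₁ : SimpleGraph V₁) (G₂ : SimpleGraph V₂)
    (hc₁ : G₁.Connected) (hc₂ : G₂.Connected)
    (n₁ n₂ m₁ m₂ : ℕ)
    (hn₁ : n₁ = Nat.card V₁) (hn₂ : n₂ = Nat.card V₂)
    (hm₁ : m₁ = numEdges G₁) (hm₂ : m₂ = numEdges G₂) :
    (Findex (vertexQJoin G₁ G₂) : ℤ) =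
      (Findex G₁ : ℤ) + (Findex G₂ : ℤ) + 3 * (n₂ : ℤ) * (M1 G₁ : ℤ) + 3 * (n₁ : ℤ) * (M1 G₂ : ℤ)
        + (M4 G₁ : ℤ) + 3 * (ReZM G₁ : ℤ) + 6 * (m₁ : ℤ) * (n₂ : ℤ) ^ 2 + 6 * (m₂ : ℤ) * (n₁ : ℤ) ^ 2
        + (n₁ : ℤ) * (n₂ : ℤ) * ((n₁ : ℤ) ^ 2 + (n₂ : ℤ) ^ 2) :=
  Findex_vertexQJoin_general G₁ G₂ n₁ n₂ m₁ m₂ hn₁ hn₂ hm₁ hm₂
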